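/- Let k ≥ 2 and let L : ℤ → ℚ satisfy L_m = 0 unless 0 ≤ m ≤ k−1, and Σ_{m=0}^{k−1} L_m = k^k. Define the families L^{N,2}, L^{N,3} for all N ≥ k by the downward iteration of the Fano recursion. Then for every integer N with N − k ≥ 2 one has γ^{N,k,1}_0 = k^k and γ^{N,k,2}_0 = γ^{N,k,3}_0 = 0, where the γ's are computed from the family (L^1 = L, L^2 = L^{N,2}, L^3 = L^{N,3}). Equivalently, the main relation of the corresponding quantum Kähler subring is (O_e)^{N−1} − k^k q (O_e)^{k−1} = 0 modulo q^4. -/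

import Mathlib

/-- The closed-formula coefficient `γ^{N,k,d}_m` from the paper. -/
noncomputable def gammaCoeff (N k : ℤ) (L : ℕ → ℤ → ℚ) (d : ℕ) (m : ℤ) : ℚ :=
  ∑ l ∈ Finset.Icc 1 d,
    (-1 : ℚ) ^ (l - 1) *
      ∑ dv ∈ (Fintype.piFinset fun _ : Fin l => Finset.Icc 1 d).filter
          (fun dv => ∑ i, dv i = d),
        ∑ jv ∈ (Fintype.piFinset fun _ : Fin l => Finset.Icc m (N - 1 - (N - k) * d)).filter
            (fun jv => ∀ a b : Fin l, a ≤ b → jv a ≤ jv b),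
          ∏ i : Fin l, L (dv i) (jv i + (∑ n ∈ Finset.Iio i, (dv n : ℤ)) * (N - k))

/-- Downward iteration of the degree-2 Fano recursion, as a function of the number of
steps `t = 2k − N` below the range `N ≥ 2k` where the constants vanish. -/
def iter2 (k : ℤ) (L : ℤ → ℚ) : ℕ → ℤ → ℚ
  | 0, _ => 0
  | t + 1, m =>
      (1/2) * (iter2 k L t (m - 1) + iter2 k L t m
        + 2 * L m * L (m + ((2 * k - ((t : ℤ) + 1)) - k)))

/-- Downward iteration of the degree-3 Fano recursion. -/
def iter3 (k : ℤ) (L : ℤ → ℚ) : ℕ → ℤ → ℚ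
  | 0, _ => 0
  | t + 1, m =>
      (1/18) * (4 * iter3 k L t (m - 2) + 10 * iter3 k L t (m - 1) + 4 * iter3 k L t m
        + 12 * iter2 k L t (m - 1) * L (m + 2 * ((2 * k - ((t : ℤ) + 1)) - k))
        + 9 * iter2 k L t m * L (m + 2 * ((2 * k - ((t : ℤ) + 1)) - k))
        + 6 * iter2 k L t m * L (m + 1 + 2 * ((2 * k - ((t : ℤ) + 1)) - k))
        + 6 * L (m - 1) * iter2 k L t (m - 1 + ((2 * k - ((t : ℤ) + 1)) - k))
        + 9 * L m * iter2 k L t (m - 1 + ((2 * k - ((t : ℤ) + 1)) - k))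
        + 12 * L m * iter2 k L t (m + ((2 * k - ((t : ℤ) + 1)) - k))
        + 18 * L m * L (m + ((2 * k - ((t : ℤ) + 1)) - k))
            * L (m + 2 * ((2 * k - ((t : ℤ) + 1)) - k)))

/-- The conic constants `L^{N,2}` obtained by downward iteration of the Fano recursion. -/
def LN2 (k : ℤ) (L : ℤ → ℚ) (N : ℤ) (m : ℤ) : ℚ := iter2 k L (2 * k - N).toNat m

/-- The cubic constants `L^{N,3}` obtained by downward iteration of the Fano recursion. -/
def LN3 (k : ℤ) (L : ℤ → ℚ) (N : ℤ) (m : ℤ) : ℚ := iter3 k L (2 * k - N).toNat m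

/-- The family `(L^1 = L, L^2 = L^{N,2}, L^3 = L^{N,3})` of structural constants. -/
def famN (k : ℤ) (L : ℤ → ℚ) (N : ℤ) : ℕ → ℤ → ℚ :=
  fun d m => if d = 1 then L m else if d = 2 then LN2 k L N m
    else if d = 3 then LN3 k L N m else 0


open Finset

namespace FanoAux
lemma icc_split_bot {a b : ℤ} (h : a ≤ b) (f : ℤ → ℚ) :
    ∑ j ∈ Icc a b, f j = f a + ∑ j ∈ Icc (a+1) b, f j := by
  have : Icc a b = insert a (Icc (a+1) b) := by
    ext x; simp [Finset.mem_Icc, Finset.mem_insert]; omega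
  rw [this, Finset.sum_insert (by simp)]
lemma sum_drop_bot {a b : ℤ} {f : ℤ → ℚ} (h : f a = 0) :
    ∑ j ∈ Icc a b, f j = ∑ j ∈ Icc (a+1) b, f j := by
  rcases le_or_gt a b with hab | hab
  · rw [icc_split_bot hab, h, zero_add]
  · rw [Finset.Icc_eq_empty (by omega), Finset.Icc_eq_empty (by omega)]
lemma icc_split_top {a b : ℤ} (h : a ≤ b) (f : ℤ → ℚ) :
    ∑ j ∈ Icc a b, f j = (∑ j ∈ Icc a (b-1), f j) + f b := by
  have : Icc a b = insert b (Icc a (b-1)) := by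
    ext x; simp [Finset.mem_Icc, Finset.mem_insert]; omega
  rw [this, Finset.sum_insert (by simp), add_comm]
lemma sum_drop_top {a b : ℤ} {f : ℤ → ℚ} (h : f b = 0) :
    ∑ j ∈ Icc a b, f j = ∑ j ∈ Icc a (b-1), f j := by
  rcases le_or_gt a b with hab | hab
  · rw [icc_split_top hab, h, add_zero]
  · rw [Finset.Icc_eq_empty (by omega), Finset.Icc_eq_empty (by omega)]
lemma sum_reindex (a b c a' b' : ℤ) (f g : ℤ → ℚ) (ha : a = a' + c) (hb : b = b' + c)
    (h : ∀ j, f (j + c) = g j) :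
    ∑ j ∈ Icc a b, f j = ∑ j ∈ Icc a' b', g j := by
  subst ha; subst hb
  rw [← map_add_right_Icc a' b' c, Finset.sum_map]
  refine Finset.sum_congr rfl fun j _ => ?_
  simpa [addRightEmbedding] using h j

variable {K : ℤ} {L : ℤ → ℚ}
variable (hL0 : ∀ m : ℤ, m < 0 → L m = 0) (hLk : ∀ m : ℤ, K ≤ m → L m = 0)


include hLk in
lemma V2hi : ∀ (t : ℕ) (m : ℤ), (t : ℤ) ≤ m → iter2 K L t m = 0 := by
  intro t
  induction t with
  | zero => intro m _; simp [iter2]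
  | succ t ih =>
      intro m hm
      push_cast at hm
      rw [iter2, ih (m-1) (by omega), ih m (by omega),
        hLk (m + ((2*K - ((t:ℤ)+1)) - K)) (by omega)]
      ring

include hL0 in
lemma V2neg : ∀ (t : ℕ) (m : ℤ), m < 0 → iter2 K L t m = 0 := by
  intro t
  induction t with
  | zero => intro m _; simp [iter2]
  | succ t ih =>
      intro m hm
      rw [iter2, ih (m-1) (by omega), ih m (by omega), hL0 m (by omega)]
      ring

-- the tail sum `g x`
include hLk in
lemma g1 {t : ℕ} {x : ℤ} (hx : x ≤ 2*(t:ℤ)+1-K+1) :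
    (∑ j ∈ Icc x (2*(t:ℤ)+1-K), L (j + 2*K - 2*(t:ℤ) - 2))
    = L (x + 2*K - 2*(t:ℤ) - 2)
      + ∑ j ∈ Icc (x+1) (2*(t:ℤ)+1-K), L (j + 2*K - 2*(t:ℤ) - 2) := by
  rcases le_or_gt x (2*(t:ℤ)+1-K) with h | h
  · exact icc_split_bot h _
  · rw [Finset.Icc_eq_empty (by omega), Finset.Icc_eq_empty (by omega),
      hLk (x + 2*K - 2*(t:ℤ) - 2) (by omega)]
    simp
lemma gz {t : ℕ} {x : ℤ} (hx : 2*(t:ℤ)+1-K < x) :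
    (∑ j ∈ Icc x (2*(t:ℤ)+1-K), L (j + 2*K - 2*(t:ℤ) - 2)) = 0 := by
  rw [Finset.Icc_eq_empty (by omega), Finset.sum_empty]

lemma sum_shift (a b c : ℤ) (f : ℤ → ℚ) :
    ∑ j ∈ Icc a b, f (j + c) = ∑ j ∈ Icc (a+c) (b+c), f j := by
  rw [← map_add_right_Icc a b c, Finset.sum_map]
  rfl

lemma sum_shift_sub (a b c : ℤ) (f : ℤ → ℚ) :
    ∑ j ∈ Icc a b, f (j - c) = ∑ j ∈ Icc (a-c) (b-c), f j := by
  simpa [sub_eq_add_neg] using sum_shift a b (-c) f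


include hL0 in
lemma V3neg : ∀ (t : ℕ) (m : ℤ), m < 0 → iter3 K L t m = 0 := by
  intro t
  induction t with
  | zero => intro m _; simp [iter3]
  | succ t ih =>
      intro m hm
      rw [iter3, ih (m-2) (by omega), ih (m-1) (by omega), ih m (by omega),
        V2neg hL0 t (m-1) (by omega), V2neg hL0 t m (by omega),
        hL0 m (by omega), hL0 (m-1) (by omega)]
      ring

include hLk in
lemma V3hi : ∀ (t : ℕ) (m : ℤ), 2*(t:ℤ) - K ≤ m → iter3 K L t m = 0 := by
  intro t
  induction t with
  | zero => intro m _; simp [iter3]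
  | succ t ih =>
      intro m hm
      push_cast at hm
      rw [iter3, ih (m-2) (by omega), ih (m-1) (by omega), ih m (by omega),
        V2hi hLk t (m - 1 + ((2*K - ((t:ℤ)+1)) - K)) (by omega),
        V2hi hLk t (m + ((2*K - ((t:ℤ)+1)) - K)) (by omega),
        hLk (m + 2*((2*K - ((t:ℤ)+1)) - K)) (by omega),
        hLk (m + 1 + 2*((2*K - ((t:ℤ)+1)) - K)) (by omega)]
      ring


lemma sum_pi1 (s : Finset ℤ) (F : (Fin 1 → ℤ) → ℚ) :
    ∑ jv ∈ ((Fintype.piFinset fun _ : Fin 1 => s).filter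
      (fun jv => ∀ a b : Fin 1, a ≤ b → jv a ≤ jv b)), F jv
    = ∑ j ∈ s, F ![j] := by
  rw [Finset.filter_true_of_mem (fun jv _ => fun a b _ => by
    have : a = b := Subsingleton.elim a b
    rw [this])]
  refine Finset.sum_bij' (i := fun jv _ => jv 0) (j := fun x _ => ![x])
    ?_ ?_ ?_ ?_ ?_
  · intro jv hjv
    simp only [Fintype.mem_piFinset] at hjv
    exact hjv 0
  · intro x hx
    simp only [Fintype.mem_piFinset]
    intro i
    simpa using hx
  · intro jv hjv
    funext i
    fin_cases i
    simp
  · intro x hx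
    simp
  · intro jv hjv
    congr 1
    funext i
    fin_cases i
    simp

lemma sum_mono2 (a b : ℤ) (F : ℤ → ℤ → ℚ) :
    ∑ jv ∈ ((Fintype.piFinset fun _ : Fin 2 => Icc a b).filter
      (fun jv => ∀ i j : Fin 2, i ≤ j → jv i ≤ jv j)), F (jv 0) (jv 1)
    = ∑ j1 ∈ Icc a b, ∑ j2 ∈ Icc j1 b, F j1 j2 := by
  have h1 : ∑ jv ∈ ((Fintype.piFinset fun _ : Fin 2 => Icc a b).filter
      (fun jv => ∀ i j : Fin 2, i ≤ j → jv i ≤ jv j)), F (jv 0) (jv 1)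
      = ∑ x ∈ (Icc a b).sigma (fun j1 => Icc j1 b), F x.1 x.2 := by
    refine Finset.sum_bij' (i := fun jv _ => (⟨jv 0, jv 1⟩ : Σ _ : ℤ, ℤ))
      (j := fun p _ => ![p.1, p.2]) ?_ ?_ ?_ ?_ ?_
    · intro jv hjv
      simp only [Finset.mem_filter, Fintype.mem_piFinset, Finset.mem_Icc] at hjv
      simp only [Finset.mem_sigma, Finset.mem_Icc]
      obtain ⟨hmem, hmono⟩ := hjv
      have h01 := hmono 0 1 (by decide)
      exact ⟨⟨(hmem 0).1, (hmem 0).2⟩, ⟨h01, (hmem 1).2⟩⟩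
    · intro p hp
      simp only [Finset.mem_sigma, Finset.mem_Icc] at hp
      simp only [Finset.mem_filter, Fintype.mem_piFinset, Finset.mem_Icc]
      constructor
      · intro i
        fin_cases i <;> simp <;> omega
      · intro i j hij
        fin_cases i <;> fin_cases j <;> simp_all <;> omega
    · intro jv hjv
      funext i
      fin_cases i <;> simp
    · intro p hp
      simp
    · intro jv hjv
      simp
  exact h1.trans (Finset.sum_sigma (Icc a b) (fun j1 => Icc j1 b)
    (fun (p : Σ _ : ℤ, ℤ) => F p.1 p.2))

lemma sum_mono3 (a b : ℤ) (F : ℤ → ℤ → ℤ → ℚ) :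
    ∑ jv ∈ ((Fintype.piFinset fun _ : Fin 3 => Icc a b).filter
      (fun jv => ∀ i j : Fin 3, i ≤ j → jv i ≤ jv j)), F (jv 0) (jv 1) (jv 2)
    = ∑ j1 ∈ Icc a b, ∑ j2 ∈ Icc j1 b, ∑ j3 ∈ Icc j2 b, F j1 j2 j3 := by
  have h1 : ∑ jv ∈ ((Fintype.piFinset fun _ : Fin 3 => Icc a b).filter
      (fun jv => ∀ i j : Fin 3, i ≤ j → jv i ≤ jv j)), F (jv 0) (jv 1) (jv 2)
      = ∑ x ∈ ((Icc a b).sigma (fun j1 => Icc j1 b)).sigma (fun p => Icc p.2 b),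
          F x.1.1 x.1.2 x.2 := by
    refine Finset.sum_bij'
      (i := fun jv _ => (⟨⟨jv 0, jv 1⟩, jv 2⟩ : Σ _p : Σ _ : ℤ, ℤ, ℤ))
      (j := fun p _ => ![p.1.1, p.1.2, p.2]) ?_ ?_ ?_ ?_ ?_
    · intro jv hjv
      simp only [Finset.mem_filter, Fintype.mem_piFinset, Finset.mem_Icc] at hjv
      simp only [Finset.mem_sigma, Finset.mem_Icc]
      obtain ⟨hmem, hmono⟩ := hjv
      have h01 := hmono 0 1 (by decide)
      have h12 := hmono 1 2 (by decide)
      exact ⟨⟨⟨(hmem 0).1, (hmem 0).2⟩, ⟨h01, (hmem 1).2⟩⟩, ⟨h12, (hmem 2).2⟩⟩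
    · intro p hp
      simp only [Finset.mem_sigma, Finset.mem_Icc] at hp
      simp only [Finset.mem_filter, Fintype.mem_piFinset, Finset.mem_Icc]
      constructor
      · intro i
        fin_cases i <;> simp <;> omega
      · intro i j hij
        fin_cases i <;> fin_cases j <;> simp_all <;> omega
    · intro jv hjv
      funext i
      fin_cases i <;> simp
    · intro p hp
      simp
    · intro jv hjv
      simp
  exact h1.trans ((Finset.sum_sigma ((Icc a b).sigma (fun j1 => Icc j1 b))
      (fun p => Icc p.2 b)
      (fun (x : Σ _p : Σ _ : ℤ, ℤ, ℤ) => F x.1.1 x.1.2 x.2)).trans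
    (Finset.sum_sigma (Icc a b) (fun j1 => Icc j1 b)
      (fun (p : Σ _ : ℤ, ℤ) => ∑ j3 ∈ Icc p.2 b, F p.1 p.2 j3)))


end FanoAux

open FanoAux

lemma sum_comb10 (s : Finset ℤ) (c1 c2 c3 c4 c5 c6 c7 c8 c9 : ℚ) (f1 f2 f3 f4 f5 f6 f7 f8 f9 f10 : ℤ → ℚ) :
    ∑ j ∈ s, (c1 * f1 j + c2 * f2 j + c3 * f3 j + c4 * f4 j + c5 * f5 j
      + c6 * f6 j + c7 * f7 j + c8 * f8 j + c9 * f9 j + f10 j)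
    = c1 * (∑ j ∈ s, f1 j) + c2 * (∑ j ∈ s, f2 j) + c3 * (∑ j ∈ s, f3 j)
      + c4 * (∑ j ∈ s, f4 j) + c5 * (∑ j ∈ s, f5 j) + c6 * (∑ j ∈ s, f6 j)
      + c7 * (∑ j ∈ s, f7 j) + c8 * (∑ j ∈ s, f8 j) + c9 * (∑ j ∈ s, f9 j)
      + (∑ j ∈ s, f10 j) := by
  simp [Finset.sum_add_distrib, Finset.mul_sum]


/-- partial sums of iter2 -/
noncomputable def S2 (K : ℤ) (L : ℤ → ℚ) (t : ℕ) (m : ℤ) : ℚ := ∑ j ∈ Icc m ((t:ℤ)-1), iter2 K L t j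

noncomputable def T2 (K : ℤ) (L : ℤ → ℚ) (t : ℕ) (m : ℤ) : ℚ :=
  ∑ j1 ∈ Icc m ((t:ℤ)-1), ∑ j2 ∈ Icc j1 ((t:ℤ)-1), L j1 * L (j2 + (K - (t:ℤ)))

section
variable {K : ℤ} {L : ℤ → ℚ}
variable (hL0 : ∀ m : ℤ, m < 0 → L m = 0) (hLk : ∀ m : ℤ, K ≤ m → L m = 0)

include hL0 hLk in
lemma G2 : ∀ (t : ℕ) (m : ℤ), m ≤ 0 → S2 K L t m = T2 K L t m := by
  intro t
  induction t with
  | zero =>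
      intro m hm
      have h1 : S2 K L 0 m = 0 := by simp [S2, iter2]
      have h2 : T2 K L 0 m = 0 := by
        unfold T2
        refine Finset.sum_eq_zero fun j1 hj1 => ?_
        simp only [Finset.mem_Icc] at hj1
        refine Finset.sum_eq_zero fun j2 _ => ?_
        rw [hL0 j1 (by omega)]; ring
      rw [h1, h2]
  | succ t ih =>
      intro m hm
      have hc1 : ((t+1:ℕ) : ℤ) - 1 = (t:ℤ) := by push_cast; ring
      have expand : ∀ j : ℤ, iter2 K L (t+1) j
          = (1/2)*iter2 K L t (j-1) + (1/2)*iter2 K L t j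
            + L j * L (j + (K - ((t:ℤ)+1))) := by
        intro j
        rw [iter2, show (2*K - ((t:ℤ)+1)) - K = K - ((t:ℤ)+1) by ring]
        ring
      have hS : S2 K L (t+1) m = (1/2) * (∑ j ∈ Icc m (t:ℤ), iter2 K L t (j-1))
            + (1/2) * (∑ j ∈ Icc m (t:ℤ), iter2 K L t j)
            + (∑ j ∈ Icc m (t:ℤ), L j * L (j + (K - ((t:ℤ)+1)))) := by
        unfold S2
        rw [hc1, Finset.sum_congr rfl fun j _ => expand j, Finset.sum_add_distrib,
          Finset.sum_add_distrib, ← Finset.mul_sum, ← Finset.mul_sum]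
      have h1 : (∑ j ∈ Icc m (t:ℤ), iter2 K L t (j-1)) = S2 K L t m := by
        rw [sum_shift_sub m (t:ℤ) 1 (iter2 K L t), S2,
          sum_drop_bot (V2neg hL0 t (m-1) (by omega))]
        norm_num
      have h2 : (∑ j ∈ Icc m (t:ℤ), iter2 K L t j) = S2 K L t m := by
        rw [sum_drop_top (V2hi hLk t (t:ℤ) le_rfl), S2]
      have hT : T2 K L (t+1) m
          = T2 K L t m + (∑ j ∈ Icc m (t:ℤ), L j * L (j + (K - ((t:ℤ)+1)))) := by
        unfold T2
        rw [hc1]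
        simp only [Nat.cast_add, Nat.cast_one]
        have hrow : ∀ j1 ∈ Icc m (t:ℤ),
            (∑ j2 ∈ Icc j1 (t:ℤ), L j1 * L (j2 + (K - ((t:ℤ)+1))))
            = (∑ j2 ∈ Icc j1 ((t:ℤ)-1), L j1 * L (j2 + (K - (t:ℤ))))
              + L j1 * L (j1 + (K - ((t:ℤ)+1))) := by
          intro j1 hj1
          simp only [Finset.mem_Icc] at hj1
          rw [icc_split_bot hj1.2 (fun j2 => L j1 * L (j2 + (K - ((t:ℤ)+1)))), add_comm]
          congr 1
          have hsh := sum_shift j1 ((t:ℤ)-1) 1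
            (fun j2 => L j1 * L (j2 + (K - ((t:ℤ)+1))))
          rw [show (t:ℤ)-1+1 = (t:ℤ) by ring] at hsh
          rw [← hsh]
          refine Finset.sum_congr rfl fun j2 _ => ?_
          have : j2 + (K - (t:ℤ)) = j2 + 1 + (K - ((t:ℤ)+1)) := by ring
          rw [this]
        rw [Finset.sum_congr rfl hrow, Finset.sum_add_distrib]
        congr 1
        refine (Finset.sum_subset (Finset.Icc_subset_Icc_right (by omega)) ?_).symm
        intro x hx hx'
        simp only [Finset.mem_Icc] at hx hx'
        rw [Finset.Icc_eq_empty (by omega), Finset.sum_empty]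
      rw [hS, h1, h2, hT, ih m hm]
      ring
end

noncomputable def S3 (K : ℤ) (L : ℤ → ℚ) (t : ℕ) (m : ℤ) : ℚ :=
  ∑ j ∈ Icc m (2*(t:ℤ)-K-1), iter3 K L t j

noncomputable def P3 (K : ℤ) (L : ℤ → ℚ) (t : ℕ) (m : ℤ) : ℚ :=
  ∑ j1 ∈ Icc m (2*(t:ℤ)-K-1), ∑ j2 ∈ Icc j1 (2*(t:ℤ)-K-1),
    L j1 * iter2 K L t (j2 + (K - (t:ℤ)))

noncomputable def Q3 (K : ℤ) (L : ℤ → ℚ) (t : ℕ) (m : ℤ) : ℚ :=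
  ∑ j1 ∈ Icc m (2*(t:ℤ)-K-1), ∑ j2 ∈ Icc j1 (2*(t:ℤ)-K-1),
    iter2 K L t j1 * L (j2 + 2*(K - (t:ℤ)))

noncomputable def W3 (K : ℤ) (L : ℤ → ℚ) (t : ℕ) (m : ℤ) : ℚ :=
  ∑ j1 ∈ Icc m (2*(t:ℤ)-K-1), ∑ j2 ∈ Icc j1 (2*(t:ℤ)-K-1), ∑ j3 ∈ Icc j2 (2*(t:ℤ)-K-1),
    L j1 * L (j2 + (K - (t:ℤ))) * L (j3 + 2*(K - (t:ℤ)))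

section
variable {K : ℤ} {L : ℤ → ℚ}
variable (hL0 : ∀ m : ℤ, m < 0 → L m = 0) (hLk : ∀ m : ℤ, K ≤ m → L m = 0)

omit hL0 in
include hLk in
set_option maxHeartbeats 1000000 in
lemma stepW (t : ℕ) (m : ℤ) (hm : m ≤ 0) :
    W3 K L (t+1) m = W3 K L t m
      + (∑ j1 ∈ Icc m (2*(t:ℤ)+1-K), ∑ j2 ∈ Icc j1 (2*(t:ℤ)+1-K),
          L j1 * L (j1 + K - (t:ℤ) - 1) * L (j2 + 2*K - 2*(t:ℤ) - 2))
      + (∑ j1 ∈ Icc m (2*(t:ℤ)+1-K), ∑ j2 ∈ Icc j1 (2*(t:ℤ)+1-K),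
          L j1 * L (j2 + K - (t:ℤ) - 1) * L (j2 + 2*K - 2*(t:ℤ) - 2))
      - (∑ j ∈ Icc m (2*(t:ℤ)+1-K),
          L j * L (j + K - (t:ℤ) - 1) * L (j + 2*K - 2*(t:ℤ) - 2)) := by
  -- Notation: B = 2t+1-K.
  -- 1. unfold W3 (t+1) and normalize
  have hW1 : W3 K L (t+1) m
      = ∑ j1 ∈ Icc m (2*(t:ℤ)+1-K), ∑ j2 ∈ Icc j1 (2*(t:ℤ)+1-K),
          (L j1 * L (j2 + K - (t:ℤ) - 1))
            * ∑ j3 ∈ Icc j2 (2*(t:ℤ)+1-K), L (j3 + 2*K - 2*(t:ℤ) - 2) := by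
    rw [W3]
    simp only [Nat.cast_add, Nat.cast_one,
      show 2*((t:ℤ)+1)-K-1 = 2*(t:ℤ)+1-K from by ring,
      show ∀ x : ℤ, x + (K - ((t:ℤ)+1)) = x + K - (t:ℤ) - 1 from fun x => by ring,
      show ∀ x : ℤ, x + 2*(K - ((t:ℤ)+1)) = x + 2*K - 2*(t:ℤ) - 2 from fun x => by ring]
    refine Finset.sum_congr rfl fun j1 _ => Finset.sum_congr rfl fun j2 _ => ?_
    rw [Finset.mul_sum]
  -- 2. split off j3 = j2
  have hW2 : W3 K L (t+1) m
      = (∑ j1 ∈ Icc m (2*(t:ℤ)+1-K), ∑ j2 ∈ Icc j1 (2*(t:ℤ)+1-K),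
          L j1 * L (j2 + K - (t:ℤ) - 1) * L (j2 + 2*K - 2*(t:ℤ) - 2))
        + ∑ j1 ∈ Icc m (2*(t:ℤ)+1-K), ∑ j2 ∈ Icc j1 (2*(t:ℤ)+1-K),
            (L j1 * L (j2 + K - (t:ℤ) - 1))
              * ∑ j3 ∈ Icc (j2+1) (2*(t:ℤ)+1-K), L (j3 + 2*K - 2*(t:ℤ) - 2) := by
    rw [hW1, ← Finset.sum_add_distrib]
    refine Finset.sum_congr rfl fun j1 hj1 => ?_
    rw [← Finset.sum_add_distrib]
    refine Finset.sum_congr rfl fun j2 hj2 => ?_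
    simp only [Finset.mem_Icc] at hj1 hj2
    rw [g1 hLk (by omega)]
    ring
  -- 3. split off j2 = j1 in the second part
  have hW3 : (∑ j1 ∈ Icc m (2*(t:ℤ)+1-K), ∑ j2 ∈ Icc j1 (2*(t:ℤ)+1-K),
          (L j1 * L (j2 + K - (t:ℤ) - 1))
            * ∑ j3 ∈ Icc (j2+1) (2*(t:ℤ)+1-K), L (j3 + 2*K - 2*(t:ℤ) - 2))
      = (∑ j1 ∈ Icc m (2*(t:ℤ)+1-K),
          (L j1 * L (j1 + K - (t:ℤ) - 1))
            * ∑ j3 ∈ Icc (j1+1) (2*(t:ℤ)+1-K), L (j3 + 2*K - 2*(t:ℤ) - 2))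
        + ∑ j1 ∈ Icc m (2*(t:ℤ)+1-K), ∑ j2 ∈ Icc (j1+1) (2*(t:ℤ)+1-K),
            (L j1 * L (j2 + K - (t:ℤ) - 1))
              * ∑ j3 ∈ Icc (j2+1) (2*(t:ℤ)+1-K), L (j3 + 2*K - 2*(t:ℤ) - 2) := by
    rw [← Finset.sum_add_distrib]
    refine Finset.sum_congr rfl fun j1 hj1 => ?_
    simp only [Finset.mem_Icc] at hj1
    exact icc_split_bot hj1.2 _
  -- 4. the A1-sum equals the diagonal D3 plus the V1 part
  have hW4 : (∑ j1 ∈ Icc m (2*(t:ℤ)+1-K), ∑ j2 ∈ Icc j1 (2*(t:ℤ)+1-K),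
          L j1 * L (j1 + K - (t:ℤ) - 1) * L (j2 + 2*K - 2*(t:ℤ) - 2))
      = (∑ j ∈ Icc m (2*(t:ℤ)+1-K),
          L j * L (j + K - (t:ℤ) - 1) * L (j + 2*K - 2*(t:ℤ) - 2))
        + ∑ j1 ∈ Icc m (2*(t:ℤ)+1-K),
            (L j1 * L (j1 + K - (t:ℤ) - 1))
              * ∑ j3 ∈ Icc (j1+1) (2*(t:ℤ)+1-K), L (j3 + 2*K - 2*(t:ℤ) - 2) := by
    rw [← Finset.sum_add_distrib]
    refine Finset.sum_congr rfl fun j1 hj1 => ?_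
    simp only [Finset.mem_Icc] at hj1
    rw [icc_split_bot hj1.2
      (fun j2 => L j1 * L (j1 + K - (t:ℤ) - 1) * L (j2 + 2*K - 2*(t:ℤ) - 2)),
      Finset.mul_sum]
  -- 5. the strict part equals W3 at level t
  have hW5 : W3 K L t m
      = ∑ j1 ∈ Icc m (2*(t:ℤ)+1-K), ∑ j2 ∈ Icc (j1+1) (2*(t:ℤ)+1-K),
          (L j1 * L (j2 + K - (t:ℤ) - 1))
            * ∑ j3 ∈ Icc (j2+1) (2*(t:ℤ)+1-K), L (j3 + 2*K - 2*(t:ℤ) - 2) := by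
    rw [W3]
    have inner3 : ∀ j2 : ℤ,
        (∑ j3 ∈ Icc j2 (2*(t:ℤ)-K-1), L (j3 + 2*(K - (t:ℤ))))
        = ∑ j3 ∈ Icc (j2+2) (2*(t:ℤ)+1-K), L (j3 + 2*K - 2*(t:ℤ) - 2) := by
      intro j2
      exact sum_reindex j2 (2*(t:ℤ)-K-1) (-2) (j2+2) (2*(t:ℤ)+1-K)
        (fun j3 => L (j3 + 2*(K - (t:ℤ)))) (fun j3 => L (j3 + 2*K - 2*(t:ℤ) - 2))
        (by ring) (by ring) (fun j => by ring_nf)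
    have inner2 : ∀ j1 : ℤ,
        (∑ j2 ∈ Icc j1 (2*(t:ℤ)-K-1), (L j1 * L (j2 + (K - (t:ℤ))))
          * ∑ j3 ∈ Icc (j2+2) (2*(t:ℤ)+1-K), L (j3 + 2*K - 2*(t:ℤ) - 2))
        = ∑ j2 ∈ Icc (j1+1) (2*(t:ℤ)-K), (L j1 * L (j2 + K - (t:ℤ) - 1))
            * ∑ j3 ∈ Icc (j2+1) (2*(t:ℤ)+1-K), L (j3 + 2*K - 2*(t:ℤ) - 2) := by
      intro j1
      refine sum_reindex j1 (2*(t:ℤ)-K-1) (-1) (j1+1) (2*(t:ℤ)-K) _ _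
        (by ring) (by ring) (fun j => ?_)
      show (L j1 * L (j + -1 + (K - (t:ℤ))))
          * (∑ j3 ∈ Icc ((j + -1)+2) (2*(t:ℤ)+1-K), L (j3 + 2*K - 2*(t:ℤ) - 2))
        = (L j1 * L (j + K - (t:ℤ) - 1))
            * ∑ j3 ∈ Icc (j+1) (2*(t:ℤ)+1-K), L (j3 + 2*K - 2*(t:ℤ) - 2)
      ring_nf
    calc W3 K L t m = ∑ j1 ∈ Icc m (2*(t:ℤ)-K-1), ∑ j2 ∈ Icc j1 (2*(t:ℤ)-K-1),
            (L j1 * L (j2 + (K - (t:ℤ))))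
              * ∑ j3 ∈ Icc (j2+2) (2*(t:ℤ)+1-K), L (j3 + 2*K - 2*(t:ℤ) - 2) := by
          rw [W3]
          refine Finset.sum_congr rfl fun j1 _ => Finset.sum_congr rfl fun j2 _ => ?_
          rw [← inner3 j2, Finset.mul_sum]
      _ = ∑ j1 ∈ Icc m (2*(t:ℤ)-K-1), ∑ j2 ∈ Icc (j1+1) (2*(t:ℤ)-K),
            (L j1 * L (j2 + K - (t:ℤ) - 1))
              * ∑ j3 ∈ Icc (j2+1) (2*(t:ℤ)+1-K), L (j3 + 2*K - 2*(t:ℤ) - 2) := by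
          exact Finset.sum_congr rfl fun j1 _ => inner2 j1
      _ = ∑ j1 ∈ Icc m (2*(t:ℤ)-K-1), ∑ j2 ∈ Icc (j1+1) (2*(t:ℤ)+1-K),
            (L j1 * L (j2 + K - (t:ℤ) - 1))
              * ∑ j3 ∈ Icc (j2+1) (2*(t:ℤ)+1-K), L (j3 + 2*K - 2*(t:ℤ) - 2) := by
          refine Finset.sum_congr rfl fun j1 _ => ?_
          have hz : (L j1 * L (2*(t:ℤ)+1-K + K - (t:ℤ) - 1))
              * (∑ j3 ∈ Icc ((2*(t:ℤ)+1-K)+1) (2*(t:ℤ)+1-K), L (j3 + 2*K - 2*(t:ℤ) - 2))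
              = 0 := by
            rw [gz (by omega)]; ring
          have h := sum_drop_top (a := j1+1)
            (f := fun j2 => (L j1 * L (j2 + K - (t:ℤ) - 1))
              * ∑ j3 ∈ Icc (j2+1) (2*(t:ℤ)+1-K), L (j3 + 2*K - 2*(t:ℤ) - 2))
            (b := 2*(t:ℤ)+1-K) hz
          rw [show 2*(t:ℤ)+1-K-1 = 2*(t:ℤ)-K from by ring] at h
          exact h.symm
      _ = ∑ j1 ∈ Icc m (2*(t:ℤ)+1-K), ∑ j2 ∈ Icc (j1+1) (2*(t:ℤ)+1-K),
            (L j1 * L (j2 + K - (t:ℤ) - 1))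
              * ∑ j3 ∈ Icc (j2+1) (2*(t:ℤ)+1-K), L (j3 + 2*K - 2*(t:ℤ) - 2) := by
          refine Finset.sum_subset (Finset.Icc_subset_Icc_right (by omega)) ?_
          intro x hx hx'
          simp only [Finset.mem_Icc] at hx hx'
          refine Finset.sum_eq_zero fun j2 hj2 => ?_
          simp only [Finset.mem_Icc] at hj2
          rw [gz (by omega)]
          ring
  rw [hW2, hW3, hW4, hW5]
  ring
end

section
variable {K : ℤ} {L : ℤ → ℚ}
variable (hL0 : ∀ m : ℤ, m < 0 → L m = 0) (hLk : ∀ m : ℤ, K ≤ m → L m = 0)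

include hL0 hLk in
set_option maxHeartbeats 1000000 in
lemma stepS3 (t : ℕ) (m : ℤ) (hm : m ≤ 0) :
    S3 K L (t+1) m = S3 K L t m
      + (1/2) * (∑ j ∈ Icc m (2*(t:ℤ)+1-K), L j * iter2 K L t (j + K - (t:ℤ) - 2))
      + (∑ j ∈ Icc m (2*(t:ℤ)+1-K), L j * iter2 K L t (j + K - (t:ℤ) - 1))
      + (1/2) * (∑ j ∈ Icc m (2*(t:ℤ)+1-K), iter2 K L t j * L (j + 2*K - 2*(t:ℤ) - 2))
      + (∑ j ∈ Icc m (2*(t:ℤ)+1-K), iter2 K L t j * L (j + 2*K - 2*(t:ℤ) - 1))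
      + (∑ j ∈ Icc m (2*(t:ℤ)+1-K),
          L j * L (j + K - (t:ℤ) - 1) * L (j + 2*K - 2*(t:ℤ) - 2)) := by
  have expand : ∀ j : ℤ, iter3 K L (t+1) j =
      (4/18) * iter3 K L t (j-2) + (10/18) * iter3 K L t (j-1) + (4/18) * iter3 K L t j
      + (2/3) * (iter2 K L t (j-1) * L (j + 2*K - 2*(t:ℤ) - 2))
      + (1/2) * (iter2 K L t j * L (j + 2*K - 2*(t:ℤ) - 2))
      + (1/3) * (iter2 K L t j * L (j + 2*K - 2*(t:ℤ) - 1))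
      + (1/3) * (L (j-1) * iter2 K L t (j + K - (t:ℤ) - 2))
      + (1/2) * (L j * iter2 K L t (j + K - (t:ℤ) - 2))
      + (2/3) * (L j * iter2 K L t (j + K - (t:ℤ) - 1))
      + L j * L (j + K - (t:ℤ) - 1) * L (j + 2*K - 2*(t:ℤ) - 2) := by
    intro j
    rw [iter3,
      show j + 2*((2*K - ((t:ℤ)+1)) - K) = j + 2*K - 2*(t:ℤ) - 2 by ring,
      show j + 1 + 2*((2*K - ((t:ℤ)+1)) - K) = j + 2*K - 2*(t:ℤ) - 1 by ring,
      show j - 1 + ((2*K - ((t:ℤ)+1)) - K) = j + K - (t:ℤ) - 2 by ring,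
      show j + ((2*K - ((t:ℤ)+1)) - K) = j + K - (t:ℤ) - 1 by ring]
    ring
  have hrange : 2*((t+1:ℕ):ℤ)-K-1 = 2*(t:ℤ)+1-K := by push_cast; ring
  have hk1 : (∑ j ∈ Icc m (2*(t:ℤ)+1-K), iter3 K L t (j-2)) = S3 K L t m := by
    rw [sum_reindex m (2*(t:ℤ)+1-K) 2 (m-2) (2*(t:ℤ)-K-1)
        (fun j => iter3 K L t (j-2)) (iter3 K L t)
        (by ring) (by ring)
        (fun j => by show iter3 K L t (j+2-2) = iter3 K L t j; ring_nf),
      sum_drop_bot (V3neg hL0 t (m-2) (by omega)),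
      show m-2+1 = m-1 by ring,
      sum_drop_bot (V3neg hL0 t (m-1) (by omega)),
      show m-1+1 = m by ring, S3]
  have hk2 : (∑ j ∈ Icc m (2*(t:ℤ)+1-K), iter3 K L t (j-1)) = S3 K L t m := by
    rw [sum_reindex m (2*(t:ℤ)+1-K) 1 (m-1) (2*(t:ℤ)-K)
        (fun j => iter3 K L t (j-1)) (iter3 K L t)
        (by ring) (by ring)
        (fun j => by show iter3 K L t (j+1-1) = iter3 K L t j; ring_nf),
      sum_drop_bot (V3neg hL0 t (m-1) (by omega)),
      show m-1+1 = m by ring,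
      sum_drop_top (V3hi hLk t (2*(t:ℤ)-K) (by omega)), S3]
  have hk3 : (∑ j ∈ Icc m (2*(t:ℤ)+1-K), iter3 K L t j) = S3 K L t m := by
    rw [sum_drop_top (V3hi hLk t (2*(t:ℤ)+1-K) (by omega)),
      show 2*(t:ℤ)+1-K-1 = 2*(t:ℤ)-K by ring,
      sum_drop_top (V3hi hLk t (2*(t:ℤ)-K) (by omega)), S3]
  have hy2 : (∑ j ∈ Icc m (2*(t:ℤ)+1-K), iter2 K L t (j-1) * L (j + 2*K - 2*(t:ℤ) - 2))
      = ∑ j ∈ Icc m (2*(t:ℤ)+1-K), iter2 K L t j * L (j + 2*K - 2*(t:ℤ) - 1) := by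
    rw [sum_reindex m (2*(t:ℤ)+1-K) 1 (m-1) (2*(t:ℤ)-K)
        (fun j => iter2 K L t (j-1) * L (j + 2*K - 2*(t:ℤ) - 2))
        (fun j => iter2 K L t j * L (j + 2*K - 2*(t:ℤ) - 1))
        (by ring) (by ring)
        (fun j => by
          show iter2 K L t (j+1-1) * L (j+1 + 2*K - 2*(t:ℤ) - 2)
            = iter2 K L t j * L (j + 2*K - 2*(t:ℤ) - 1)
          ring_nf),
      sum_drop_bot (by rw [V2neg hL0 t (m-1) (by omega)]; ring),
      show m-1+1 = m by ring]
    have h : (∑ j ∈ Icc m (2*(t:ℤ)+1-K), iter2 K L t j * L (j + 2*K - 2*(t:ℤ) - 1))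
        = ∑ j ∈ Icc m (2*(t:ℤ)+1-K-1), iter2 K L t j * L (j + 2*K - 2*(t:ℤ) - 1) :=
      sum_drop_top (by
        show iter2 K L t (2*(t:ℤ)+1-K) * L (2*(t:ℤ)+1-K + 2*K - 2*(t:ℤ) - 1) = 0
        rw [hLk (2*(t:ℤ)+1-K + 2*K - 2*(t:ℤ) - 1) (by omega)]; ring)
    rw [show 2*(t:ℤ)+1-K-1 = 2*(t:ℤ)-K by ring] at h
    exact h.symm
  have hx2 : (∑ j ∈ Icc m (2*(t:ℤ)+1-K), L (j-1) * iter2 K L t (j + K - (t:ℤ) - 2))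
      = ∑ j ∈ Icc m (2*(t:ℤ)+1-K), L j * iter2 K L t (j + K - (t:ℤ) - 1) := by
    rw [sum_reindex m (2*(t:ℤ)+1-K) 1 (m-1) (2*(t:ℤ)-K)
        (fun j => L (j-1) * iter2 K L t (j + K - (t:ℤ) - 2))
        (fun j => L j * iter2 K L t (j + K - (t:ℤ) - 1))
        (by ring) (by ring)
        (fun j => by
          show L (j+1-1) * iter2 K L t (j+1 + K - (t:ℤ) - 2)
            = L j * iter2 K L t (j + K - (t:ℤ) - 1)
          ring_nf),
      sum_drop_bot (by rw [hL0 (m-1) (by omega)]; ring),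
      show m-1+1 = m by ring]
    have h : (∑ j ∈ Icc m (2*(t:ℤ)+1-K), L j * iter2 K L t (j + K - (t:ℤ) - 1))
        = ∑ j ∈ Icc m (2*(t:ℤ)+1-K-1), L j * iter2 K L t (j + K - (t:ℤ) - 1) :=
      sum_drop_top (by
        show L (2*(t:ℤ)+1-K) * iter2 K L t (2*(t:ℤ)+1-K + K - (t:ℤ) - 1) = 0
        rw [V2hi hLk t (2*(t:ℤ)+1-K + K - (t:ℤ) - 1) (by omega)]; ring)
    rw [show 2*(t:ℤ)+1-K-1 = 2*(t:ℤ)-K by ring] at h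
    exact h.symm
  conv_lhs => rw [S3, hrange]
  rw [Finset.sum_congr rfl fun j _ => expand j]
  rw [sum_comb10 (Icc m (2*(t:ℤ)+1-K)) (4/18) (10/18) (4/18) (2/3) (1/2) (1/3) (1/3) (1/2) (2/3)
      (fun j => iter3 K L t (j-2)) (fun j => iter3 K L t (j-1)) (fun j => iter3 K L t j)
      (fun j => iter2 K L t (j-1) * L (j + 2*K - 2*(t:ℤ) - 2))
      (fun j => iter2 K L t j * L (j + 2*K - 2*(t:ℤ) - 2))
      (fun j => iter2 K L t j * L (j + 2*K - 2*(t:ℤ) - 1))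
      (fun j => L (j-1) * iter2 K L t (j + K - (t:ℤ) - 2))
      (fun j => L j * iter2 K L t (j + K - (t:ℤ) - 2))
      (fun j => L j * iter2 K L t (j + K - (t:ℤ) - 1))
      (fun j => L j * L (j + K - (t:ℤ) - 1) * L (j + 2*K - 2*(t:ℤ) - 2))]
  rw [hk1, hk2, hk3, hy2, hx2]
  ring
end

lemma sum_comb3 (s : Finset ℤ) (c1 c2 : ℚ) (f1 f2 f3 : ℤ → ℚ) :
    ∑ j ∈ s, (c1 * f1 j + c2 * f2 j + f3 j)
    = c1 * (∑ j ∈ s, f1 j) + c2 * (∑ j ∈ s, f2 j) + (∑ j ∈ s, f3 j) := by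
  simp [Finset.sum_add_distrib, Finset.mul_sum]

section
variable {K : ℤ} {L : ℤ → ℚ}
variable (hL0 : ∀ m : ℤ, m < 0 → L m = 0) (hLk : ∀ m : ℤ, K ≤ m → L m = 0)

lemma expand2 (t : ℕ) : ∀ x : ℤ, iter2 K L (t+1) x
    = (1/2) * iter2 K L t (x-1) + (1/2) * iter2 K L t x
      + L x * L (x + K - (t:ℤ) - 1) := by
  intro x
  rw [iter2, show x + ((2*K - ((t:ℤ)+1)) - K) = x + K - (t:ℤ) - 1 from by ring]
  ring

omit hL0 in
include hLk in
set_option maxHeartbeats 1000000 in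
lemma stepP (t : ℕ) (m : ℤ) (hm : m ≤ 0) :
    P3 K L (t+1) m = P3 K L t m
      + (1/2) * (∑ j ∈ Icc m (2*(t:ℤ)+1-K), L j * iter2 K L t (j + K - (t:ℤ) - 2))
      + (∑ j ∈ Icc m (2*(t:ℤ)+1-K), L j * iter2 K L t (j + K - (t:ℤ) - 1))
      + (∑ j1 ∈ Icc m (2*(t:ℤ)+1-K), ∑ j2 ∈ Icc j1 (2*(t:ℤ)+1-K),
          L j1 * L (j2 + K - (t:ℤ) - 1) * L (j2 + 2*K - 2*(t:ℤ) - 2)) := by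
  have hP1 : P3 K L (t+1) m
      = (1/2) * (∑ j1 ∈ Icc m (2*(t:ℤ)+1-K), ∑ j2 ∈ Icc j1 (2*(t:ℤ)+1-K),
          L j1 * iter2 K L t (j2 + K - (t:ℤ) - 2))
        + (1/2) * (∑ j1 ∈ Icc m (2*(t:ℤ)+1-K), ∑ j2 ∈ Icc j1 (2*(t:ℤ)+1-K),
            L j1 * iter2 K L t (j2 + K - (t:ℤ) - 1))
        + (∑ j1 ∈ Icc m (2*(t:ℤ)+1-K), ∑ j2 ∈ Icc j1 (2*(t:ℤ)+1-K),
            L j1 * L (j2 + K - (t:ℤ) - 1) * L (j2 + 2*K - 2*(t:ℤ) - 2)) := by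
    rw [P3]
    simp only [Nat.cast_add, Nat.cast_one,
      show 2*((t:ℤ)+1)-K-1 = 2*(t:ℤ)+1-K from by ring,
      show ∀ x : ℤ, x + (K - ((t:ℤ)+1)) = x + K - (t:ℤ) - 1 from fun x => by ring]
    have hrow : ∀ j1 ∈ Icc m (2*(t:ℤ)+1-K),
        (∑ j2 ∈ Icc j1 (2*(t:ℤ)+1-K), L j1 * iter2 K L (t+1) (j2 + K - (t:ℤ) - 1))
        = (1/2) * (∑ j2 ∈ Icc j1 (2*(t:ℤ)+1-K), L j1 * iter2 K L t (j2 + K - (t:ℤ) - 2))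
          + (1/2) * (∑ j2 ∈ Icc j1 (2*(t:ℤ)+1-K), L j1 * iter2 K L t (j2 + K - (t:ℤ) - 1))
          + (∑ j2 ∈ Icc j1 (2*(t:ℤ)+1-K),
              L j1 * L (j2 + K - (t:ℤ) - 1) * L (j2 + 2*K - 2*(t:ℤ) - 2)) := by
      intro j1 _
      rw [← sum_comb3 (Icc j1 (2*(t:ℤ)+1-K)) (1/2) (1/2)
          (fun j2 => L j1 * iter2 K L t (j2 + K - (t:ℤ) - 2))
          (fun j2 => L j1 * iter2 K L t (j2 + K - (t:ℤ) - 1))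
          (fun j2 => L j1 * L (j2 + K - (t:ℤ) - 1) * L (j2 + 2*K - 2*(t:ℤ) - 2))]
      refine Finset.sum_congr rfl fun j2 _ => ?_
      rw [expand2 t (j2 + K - (t:ℤ) - 1)]
      ring_nf
    rw [Finset.sum_congr rfl hrow,
      sum_comb3 (Icc m (2*(t:ℤ)+1-K)) (1/2) (1/2)
        (fun j1 => ∑ j2 ∈ Icc j1 (2*(t:ℤ)+1-K), L j1 * iter2 K L t (j2 + K - (t:ℤ) - 2))
        (fun j1 => ∑ j2 ∈ Icc j1 (2*(t:ℤ)+1-K), L j1 * iter2 K L t (j2 + K - (t:ℤ) - 1))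
        (fun j1 => ∑ j2 ∈ Icc j1 (2*(t:ℤ)+1-K),
          L j1 * L (j2 + K - (t:ℤ) - 1) * L (j2 + 2*K - 2*(t:ℤ) - 2))]
  have hPa : (∑ j1 ∈ Icc m (2*(t:ℤ)+1-K), ∑ j2 ∈ Icc j1 (2*(t:ℤ)+1-K),
        L j1 * iter2 K L t (j2 + K - (t:ℤ) - 2))
      = (∑ j ∈ Icc m (2*(t:ℤ)+1-K), L j * iter2 K L t (j + K - (t:ℤ) - 2))
        + (∑ j ∈ Icc m (2*(t:ℤ)+1-K), L j * iter2 K L t (j + K - (t:ℤ) - 1))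
        + (∑ j1 ∈ Icc m (2*(t:ℤ)+1-K), ∑ j2 ∈ Icc (j1+2) (2*(t:ℤ)+1-K),
            L j1 * iter2 K L t (j2 + K - (t:ℤ) - 2)) := by
    rw [← Finset.sum_add_distrib, ← Finset.sum_add_distrib]
    refine Finset.sum_congr rfl fun j1 hj1 => ?_
    simp only [Finset.mem_Icc] at hj1
    have htop : (L j1 * iter2 K L t ((2*(t:ℤ)+1-K+1) + K - (t:ℤ) - 2)) = 0 := by
      rw [V2hi hLk t ((2*(t:ℤ)+1-K+1) + K - (t:ℤ) - 2) (by omega)]; ring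
    have hext := sum_drop_top (a := j1)
      (f := fun j2 => L j1 * iter2 K L t (j2 + K - (t:ℤ) - 2))
      (b := 2*(t:ℤ)+1-K+1) htop
    rw [show 2*(t:ℤ)+1-K+1-1 = 2*(t:ℤ)+1-K from by ring] at hext
    rw [← hext, icc_split_bot (by omega)
        (fun j2 => L j1 * iter2 K L t (j2 + K - (t:ℤ) - 2)),
      icc_split_bot (by omega)
        (fun j2 => L j1 * iter2 K L t (j2 + K - (t:ℤ) - 2))]
    have hext2 := sum_drop_top (a := j1+1+1)
      (f := fun j2 => L j1 * iter2 K L t (j2 + K - (t:ℤ) - 2))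
      (b := 2*(t:ℤ)+1-K+1) htop
    rw [show 2*(t:ℤ)+1-K+1-1 = 2*(t:ℤ)+1-K from by ring] at hext2
    rw [hext2, show j1+1+1 = j1+2 from by ring,
      show j1+1 + K - (t:ℤ) - 2 = j1 + K - (t:ℤ) - 1 from by ring]
    ring
  have hPb : (∑ j1 ∈ Icc m (2*(t:ℤ)+1-K), ∑ j2 ∈ Icc j1 (2*(t:ℤ)+1-K),
        L j1 * iter2 K L t (j2 + K - (t:ℤ) - 1))
      = (∑ j ∈ Icc m (2*(t:ℤ)+1-K), L j * iter2 K L t (j + K - (t:ℤ) - 1))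
        + (∑ j1 ∈ Icc m (2*(t:ℤ)+1-K), ∑ j2 ∈ Icc (j1+2) (2*(t:ℤ)+1-K),
            L j1 * iter2 K L t (j2 + K - (t:ℤ) - 2)) := by
    rw [← Finset.sum_add_distrib]
    refine Finset.sum_congr rfl fun j1 hj1 => ?_
    simp only [Finset.mem_Icc] at hj1
    rw [icc_split_bot hj1.2 (fun j2 => L j1 * iter2 K L t (j2 + K - (t:ℤ) - 1))]
    congr 1
    rw [sum_reindex (j1+1) (2*(t:ℤ)+1-K) (-1) (j1+2) (2*(t:ℤ)+2-K)
        (fun j2 => L j1 * iter2 K L t (j2 + K - (t:ℤ) - 1))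
        (fun j2 => L j1 * iter2 K L t (j2 + K - (t:ℤ) - 2))
        (by ring) (by ring)
        (fun j => by
          show L j1 * iter2 K L t (j + -1 + K - (t:ℤ) - 1)
            = L j1 * iter2 K L t (j + K - (t:ℤ) - 2)
          ring_nf)]
    have htop : (L j1 * iter2 K L t ((2*(t:ℤ)+2-K) + K - (t:ℤ) - 2)) = 0 := by
      rw [V2hi hLk t ((2*(t:ℤ)+2-K) + K - (t:ℤ) - 2) (by omega)]; ring
    have hext := sum_drop_top (a := j1+2)
      (f := fun j2 => L j1 * iter2 K L t (j2 + K - (t:ℤ) - 2))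
      (b := 2*(t:ℤ)+2-K) htop
    rw [show 2*(t:ℤ)+2-K-1 = 2*(t:ℤ)+1-K from by ring] at hext
    exact hext
  have hPT : (∑ j1 ∈ Icc m (2*(t:ℤ)+1-K), ∑ j2 ∈ Icc (j1+2) (2*(t:ℤ)+1-K),
        L j1 * iter2 K L t (j2 + K - (t:ℤ) - 2)) = P3 K L t m := by
    have h1 : P3 K L t m
        = ∑ j1 ∈ Icc m (2*(t:ℤ)-K-1), ∑ j2 ∈ Icc (j1+2) (2*(t:ℤ)+1-K),
            L j1 * iter2 K L t (j2 + K - (t:ℤ) - 2) := by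
      rw [P3]
      refine Finset.sum_congr rfl fun j1 _ => ?_
      exact sum_reindex j1 (2*(t:ℤ)-K-1) (-2) (j1+2) (2*(t:ℤ)+1-K)
        (fun j2 => L j1 * iter2 K L t (j2 + (K - (t:ℤ))))
        (fun j2 => L j1 * iter2 K L t (j2 + K - (t:ℤ) - 2))
        (by ring) (by ring)
        (fun j => by
          show L j1 * iter2 K L t (j + -2 + (K - (t:ℤ)))
            = L j1 * iter2 K L t (j + K - (t:ℤ) - 2)
          ring_nf)
    have h2 : (∑ j1 ∈ Icc m (2*(t:ℤ)-K-1), ∑ j2 ∈ Icc (j1+2) (2*(t:ℤ)+1-K),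
          L j1 * iter2 K L t (j2 + K - (t:ℤ) - 2))
        = ∑ j1 ∈ Icc m (2*(t:ℤ)+1-K), ∑ j2 ∈ Icc (j1+2) (2*(t:ℤ)+1-K),
            L j1 * iter2 K L t (j2 + K - (t:ℤ) - 2) := by
      refine Finset.sum_subset (Finset.Icc_subset_Icc_right (by omega)) ?_
      intro x hx hx'
      simp only [Finset.mem_Icc] at hx hx'
      refine Finset.sum_eq_zero fun j2 hj2 => ?_
      simp only [Finset.mem_Icc] at hj2
      rw [V2hi hLk t (j2 + K - (t:ℤ) - 2) (by omega)]
      ring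
    exact (h1.trans h2).symm
  rw [hP1, hPa, hPb, hPT]
  ring

include hL0 hLk in
set_option maxHeartbeats 1000000 in
lemma stepQ (t : ℕ) (m : ℤ) (hm : m ≤ 0) :
    Q3 K L (t+1) m = Q3 K L t m
      + (1/2) * (∑ j ∈ Icc m (2*(t:ℤ)+1-K), iter2 K L t j * L (j + 2*K - 2*(t:ℤ) - 2))
      + (∑ j ∈ Icc m (2*(t:ℤ)+1-K), iter2 K L t j * L (j + 2*K - 2*(t:ℤ) - 1))
      + (∑ j1 ∈ Icc m (2*(t:ℤ)+1-K), ∑ j2 ∈ Icc j1 (2*(t:ℤ)+1-K),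
          L j1 * L (j1 + K - (t:ℤ) - 1) * L (j2 + 2*K - 2*(t:ℤ) - 2)) := by
  have hQ1 : Q3 K L (t+1) m
      = (1/2) * (∑ j1 ∈ Icc m (2*(t:ℤ)+1-K),
          iter2 K L t (j1-1) * ∑ j2 ∈ Icc j1 (2*(t:ℤ)+1-K), L (j2 + 2*K - 2*(t:ℤ) - 2))
        + (1/2) * (∑ j1 ∈ Icc m (2*(t:ℤ)+1-K),
            iter2 K L t j1 * ∑ j2 ∈ Icc j1 (2*(t:ℤ)+1-K), L (j2 + 2*K - 2*(t:ℤ) - 2))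
        + (∑ j1 ∈ Icc m (2*(t:ℤ)+1-K),
            (L j1 * L (j1 + K - (t:ℤ) - 1))
              * ∑ j2 ∈ Icc j1 (2*(t:ℤ)+1-K), L (j2 + 2*K - 2*(t:ℤ) - 2)) := by
    rw [Q3]
    simp only [Nat.cast_add, Nat.cast_one,
      show 2*((t:ℤ)+1)-K-1 = 2*(t:ℤ)+1-K from by ring,
      show ∀ x : ℤ, x + 2*(K - ((t:ℤ)+1)) = x + 2*K - 2*(t:ℤ) - 2 from fun x => by ring]
    have hrow : ∀ j1 ∈ Icc m (2*(t:ℤ)+1-K),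
        (∑ j2 ∈ Icc j1 (2*(t:ℤ)+1-K), iter2 K L (t+1) j1 * L (j2 + 2*K - 2*(t:ℤ) - 2))
        = (1/2) * (iter2 K L t (j1-1)
              * ∑ j2 ∈ Icc j1 (2*(t:ℤ)+1-K), L (j2 + 2*K - 2*(t:ℤ) - 2))
          + (1/2) * (iter2 K L t j1
              * ∑ j2 ∈ Icc j1 (2*(t:ℤ)+1-K), L (j2 + 2*K - 2*(t:ℤ) - 2))
          + ((L j1 * L (j1 + K - (t:ℤ) - 1))
              * ∑ j2 ∈ Icc j1 (2*(t:ℤ)+1-K), L (j2 + 2*K - 2*(t:ℤ) - 2)) := by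
      intro j1 _
      rw [← Finset.mul_sum, expand2 t j1]
      ring
    rw [Finset.sum_congr rfl hrow,
      sum_comb3 (Icc m (2*(t:ℤ)+1-K)) (1/2) (1/2)
        (fun j1 => iter2 K L t (j1-1)
          * ∑ j2 ∈ Icc j1 (2*(t:ℤ)+1-K), L (j2 + 2*K - 2*(t:ℤ) - 2))
        (fun j1 => iter2 K L t j1
          * ∑ j2 ∈ Icc j1 (2*(t:ℤ)+1-K), L (j2 + 2*K - 2*(t:ℤ) - 2))
        (fun j1 => (L j1 * L (j1 + K - (t:ℤ) - 1))
          * ∑ j2 ∈ Icc j1 (2*(t:ℤ)+1-K), L (j2 + 2*K - 2*(t:ℤ) - 2))]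
  have hQa : (∑ j1 ∈ Icc m (2*(t:ℤ)+1-K),
        iter2 K L t (j1-1) * ∑ j2 ∈ Icc j1 (2*(t:ℤ)+1-K), L (j2 + 2*K - 2*(t:ℤ) - 2))
      = ∑ j1 ∈ Icc m (2*(t:ℤ)+1-K),
          iter2 K L t j1 * ∑ j2 ∈ Icc (j1+1) (2*(t:ℤ)+1-K), L (j2 + 2*K - 2*(t:ℤ) - 2) := by
    rw [sum_reindex m (2*(t:ℤ)+1-K) 1 (m-1) (2*(t:ℤ)-K)
        (fun j1 => iter2 K L t (j1-1) * ∑ j2 ∈ Icc j1 (2*(t:ℤ)+1-K), L (j2 + 2*K - 2*(t:ℤ) - 2))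
        (fun j1 => iter2 K L t j1 * ∑ j2 ∈ Icc (j1+1) (2*(t:ℤ)+1-K), L (j2 + 2*K - 2*(t:ℤ) - 2))
        (by ring) (by ring)
        (fun j => by
          show iter2 K L t (j+1-1) * (∑ j2 ∈ Icc (j+1) (2*(t:ℤ)+1-K), L (j2 + 2*K - 2*(t:ℤ) - 2))
            = iter2 K L t j * ∑ j2 ∈ Icc (j+1) (2*(t:ℤ)+1-K), L (j2 + 2*K - 2*(t:ℤ) - 2)
          ring_nf),
      sum_drop_bot (by
        rw [V2neg hL0 t (m-1) (by omega)]; ring),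
      show m-1+1 = m from by ring]
    have htop : iter2 K L t (2*(t:ℤ)+1-K)
        * (∑ j2 ∈ Icc ((2*(t:ℤ)+1-K)+1) (2*(t:ℤ)+1-K), L (j2 + 2*K - 2*(t:ℤ) - 2)) = 0 := by
      rw [gz (by omega)]; ring
    have h := sum_drop_top (a := m)
      (f := fun j1 => iter2 K L t j1
        * ∑ j2 ∈ Icc (j1+1) (2*(t:ℤ)+1-K), L (j2 + 2*K - 2*(t:ℤ) - 2))
      (b := 2*(t:ℤ)+1-K) htop
    rw [show 2*(t:ℤ)+1-K-1 = 2*(t:ℤ)-K from by ring] at h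
    exact h.symm
  have hQT2 : (∑ j1 ∈ Icc m (2*(t:ℤ)+1-K),
        iter2 K L t j1 * ∑ j2 ∈ Icc (j1+2) (2*(t:ℤ)+1-K), L (j2 + 2*K - 2*(t:ℤ) - 2))
      = Q3 K L t m := by
    have h1 : Q3 K L t m
        = ∑ j1 ∈ Icc m (2*(t:ℤ)-K-1),
            iter2 K L t j1 * ∑ j2 ∈ Icc (j1+2) (2*(t:ℤ)+1-K), L (j2 + 2*K - 2*(t:ℤ) - 2) := by
      rw [Q3]
      refine Finset.sum_congr rfl fun j1 _ => ?_
      rw [← Finset.mul_sum]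
      congr 1
      exact sum_reindex j1 (2*(t:ℤ)-K-1) (-2) (j1+2) (2*(t:ℤ)+1-K)
        (fun j2 => L (j2 + 2*(K - (t:ℤ))))
        (fun j2 => L (j2 + 2*K - 2*(t:ℤ) - 2))
        (by ring) (by ring)
        (fun j => by
          show L (j + -2 + 2*(K - (t:ℤ))) = L (j + 2*K - 2*(t:ℤ) - 2)
          ring_nf)
    have h2 : (∑ j1 ∈ Icc m (2*(t:ℤ)-K-1),
          iter2 K L t j1 * ∑ j2 ∈ Icc (j1+2) (2*(t:ℤ)+1-K), L (j2 + 2*K - 2*(t:ℤ) - 2))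
        = ∑ j1 ∈ Icc m (2*(t:ℤ)+1-K),
            iter2 K L t j1 * ∑ j2 ∈ Icc (j1+2) (2*(t:ℤ)+1-K), L (j2 + 2*K - 2*(t:ℤ) - 2) := by
      refine Finset.sum_subset (Finset.Icc_subset_Icc_right (by omega)) ?_
      intro x hx hx'
      simp only [Finset.mem_Icc] at hx hx'
      rw [gz (by omega)]
      ring
    exact (h1.trans h2).symm
  have hsplitb : (∑ j1 ∈ Icc m (2*(t:ℤ)+1-K),
        iter2 K L t j1 * ∑ j2 ∈ Icc j1 (2*(t:ℤ)+1-K), L (j2 + 2*K - 2*(t:ℤ) - 2))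
      = (∑ j ∈ Icc m (2*(t:ℤ)+1-K), iter2 K L t j * L (j + 2*K - 2*(t:ℤ) - 2))
        + ∑ j1 ∈ Icc m (2*(t:ℤ)+1-K),
            iter2 K L t j1 * ∑ j2 ∈ Icc (j1+1) (2*(t:ℤ)+1-K), L (j2 + 2*K - 2*(t:ℤ) - 2) := by
    rw [← Finset.sum_add_distrib]
    refine Finset.sum_congr rfl fun j1 hj1 => ?_
    simp only [Finset.mem_Icc] at hj1
    rw [g1 hLk (by omega)]
    ring
  have hsplitT : (∑ j1 ∈ Icc m (2*(t:ℤ)+1-K),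
        iter2 K L t j1 * ∑ j2 ∈ Icc (j1+1) (2*(t:ℤ)+1-K), L (j2 + 2*K - 2*(t:ℤ) - 2))
      = (∑ j ∈ Icc m (2*(t:ℤ)+1-K), iter2 K L t j * L (j + 2*K - 2*(t:ℤ) - 1))
        + Q3 K L t m := by
    rw [← hQT2, ← Finset.sum_add_distrib]
    refine Finset.sum_congr rfl fun j1 hj1 => ?_
    simp only [Finset.mem_Icc] at hj1
    rw [g1 hLk (by omega), show j1+1 + 2*K - 2*(t:ℤ) - 2 = j1 + 2*K - 2*(t:ℤ) - 1 from by ring,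
      show j1+1+1 = j1+2 from by ring]
    ring
  have hA1 : (∑ j1 ∈ Icc m (2*(t:ℤ)+1-K),
        (L j1 * L (j1 + K - (t:ℤ) - 1))
          * ∑ j2 ∈ Icc j1 (2*(t:ℤ)+1-K), L (j2 + 2*K - 2*(t:ℤ) - 2))
      = ∑ j1 ∈ Icc m (2*(t:ℤ)+1-K), ∑ j2 ∈ Icc j1 (2*(t:ℤ)+1-K),
          L j1 * L (j1 + K - (t:ℤ) - 1) * L (j2 + 2*K - 2*(t:ℤ) - 2) := by
    refine Finset.sum_congr rfl fun j1 _ => ?_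
    rw [Finset.mul_sum]
  rw [hQ1, hQa, hsplitb, hsplitT, hA1]
  ring
end

section
variable {K : ℤ} {L : ℤ → ℚ}
variable (hL0 : ∀ m : ℤ, m < 0 → L m = 0) (hLk : ∀ m : ℤ, K ≤ m → L m = 0)

include hL0 hLk in
lemma G3 (hK : 0 ≤ K) :
    ∀ (t : ℕ) (m : ℤ), m ≤ 0 → S3 K L t m = P3 K L t m + Q3 K L t m - W3 K L t m := by
  intro t
  induction t with
  | zero =>
      intro m hm
      have hS : S3 K L 0 m = 0 := by
        rw [S3]; exact Finset.sum_eq_zero fun j _ => by simp [iter3]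
      have hP : P3 K L 0 m = 0 := by
        rw [P3]
        exact Finset.sum_eq_zero fun j1 _ => Finset.sum_eq_zero fun j2 _ => by
          simp [iter2]
      have hQ : Q3 K L 0 m = 0 := by
        rw [Q3]
        exact Finset.sum_eq_zero fun j1 _ => Finset.sum_eq_zero fun j2 _ => by
          simp [iter2]
      have hW : W3 K L 0 m = 0 := by
        rw [W3]
        refine Finset.sum_eq_zero fun j1 hj1 => ?_
        simp only [Finset.mem_Icc, Nat.cast_zero] at hj1
        refine Finset.sum_eq_zero fun j2 _ => Finset.sum_eq_zero fun j3 _ => ?_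
        rw [hL0 j1 (by omega)]
        ring
      rw [hS, hP, hQ, hW]; ring
  | succ t ih =>
      intro m hm
      rw [stepS3 hL0 hLk t m hm, stepP hLk t m hm, stepQ hL0 hLk t m hm,
        stepW hLk t m hm, ih m hm]
      ring
end

namespace FanoAux

lemma E1 (N k : ℤ) (Lf : ℕ → ℤ → ℚ) (m : ℤ) :
    gammaCoeff N k Lf 1 m = ∑ j ∈ Icc m (N - 1 - (N - k) * 1), Lf 1 j := by
  rw [gammaCoeff]
  rw [show Finset.Icc 1 1 = ({1} : Finset ℕ) from by decide, Finset.sum_singleton]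
  simp only [Nat.cast_one, Nat.cast_ofNat]
  rw [show ((Fintype.piFinset fun _ : Fin 1 => ({1} : Finset ℕ)).filter
      (fun dv => ∑ i, dv i = 1)) = {![1]} from by decide, Finset.sum_singleton]
  have hpt : ∀ jv ∈ ((Fintype.piFinset fun _ : Fin 1 => Finset.Icc m (N - 1 - (N - k) * 1)).filter
      (fun jv => ∀ a b : Fin 1, a ≤ b → jv a ≤ jv b)),
      (∏ i : Fin 1, Lf (![1] i) (jv i + (∑ n ∈ Finset.Iio i, ((![1] n : ℕ) : ℤ)) * (N - k)))
      = Lf 1 (jv 0) := by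
    intro jv _
    rw [Fin.prod_univ_one,
      show (∑ n ∈ Finset.Iio (0 : Fin 1), ((![1] n : ℕ) : ℤ)) = 0 from by decide,
      show ((![1] : Fin 1 → ℕ) 0) = 1 from rfl, zero_mul, add_zero]
  rw [Finset.sum_congr rfl hpt,
    sum_pi1 (Icc m (N - 1 - (N - k) * 1)) (fun jv => Lf 1 (jv 0))]
  simp only [Matrix.cons_val_zero]
  norm_num

lemma E2 (N k : ℤ) (Lf : ℕ → ℤ → ℚ) (m : ℤ) :
    gammaCoeff N k Lf 2 m
    = (∑ j ∈ Icc m (N - 1 - (N - k) * 2), Lf 2 j)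
      - ∑ j1 ∈ Icc m (N - 1 - (N - k) * 2), ∑ j2 ∈ Icc j1 (N - 1 - (N - k) * 2),
          Lf 1 j1 * Lf 1 (j2 + (N - k)) := by
  rw [gammaCoeff]
  rw [show Finset.Icc 1 2 = ({1, 2} : Finset ℕ) from by decide,
    Finset.sum_insert (by decide), Finset.sum_singleton]
  simp only [Nat.cast_one, Nat.cast_ofNat]
  rw [show ((Fintype.piFinset fun _ : Fin 1 => ({1, 2} : Finset ℕ)).filter
      (fun dv => ∑ i, dv i = 2)) = {![2]} from by decide, Finset.sum_singleton]
  rw [show ((Fintype.piFinset fun _ : Fin 2 => ({1, 2} : Finset ℕ)).filter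
      (fun dv => ∑ i, dv i = 2)) = {![1,1]} from by decide, Finset.sum_singleton]
  have hpt1 : ∀ jv ∈ ((Fintype.piFinset fun _ : Fin 1 => Finset.Icc m (N - 1 - (N - k) * 2)).filter
      (fun jv => ∀ a b : Fin 1, a ≤ b → jv a ≤ jv b)),
      (∏ i : Fin 1, Lf (![2] i) (jv i + (∑ n ∈ Finset.Iio i, ((![2] n : ℕ) : ℤ)) * (N - k)))
      = Lf 2 (jv 0) := by
    intro jv _
    rw [Fin.prod_univ_one,
      show (∑ n ∈ Finset.Iio (0 : Fin 1), ((![2] n : ℕ) : ℤ)) = 0 from by decide,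
      show ((![2] : Fin 1 → ℕ) 0) = 2 from rfl, zero_mul, add_zero]
  have hpt2 : ∀ jv ∈ ((Fintype.piFinset fun _ : Fin 2 => Finset.Icc m (N - 1 - (N - k) * 2)).filter
      (fun jv => ∀ a b : Fin 2, a ≤ b → jv a ≤ jv b)),
      (∏ i : Fin 2, Lf (![1,1] i) (jv i + (∑ n ∈ Finset.Iio i, ((![1,1] n : ℕ) : ℤ)) * (N - k)))
      = Lf 1 (jv 0) * Lf 1 (jv 1 + (N - k)) := by
    intro jv _
    rw [Fin.prod_univ_two,
      show (∑ n ∈ Finset.Iio (0 : Fin 2), ((![1,1] n : ℕ) : ℤ)) = 0 from by decide,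
      show (∑ n ∈ Finset.Iio (1 : Fin 2), ((![1,1] n : ℕ) : ℤ)) = 1 from by decide,
      show ((![1,1] : Fin 2 → ℕ) 0) = 1 from rfl,
      show ((![1,1] : Fin 2 → ℕ) 1) = 1 from rfl, zero_mul, add_zero, one_mul]
  rw [Finset.sum_congr rfl hpt1,
    sum_pi1 (Icc m (N - 1 - (N - k) * 2)) (fun jv => Lf 2 (jv 0)),
    Finset.sum_congr rfl hpt2,
    sum_mono2 m (N - 1 - (N - k) * 2) (fun j1 j2 => Lf 1 j1 * Lf 1 (j2 + (N - k)))]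
  simp only [Matrix.cons_val_zero]
  norm_num
  ring

lemma E3 (N k : ℤ) (Lf : ℕ → ℤ → ℚ) (m : ℤ) :
    gammaCoeff N k Lf 3 m
    = (∑ j ∈ Icc m (N - 1 - (N - k) * 3), Lf 3 j)
      - (∑ j1 ∈ Icc m (N - 1 - (N - k) * 3), ∑ j2 ∈ Icc j1 (N - 1 - (N - k) * 3),
          Lf 1 j1 * Lf 2 (j2 + (N - k)))
      - (∑ j1 ∈ Icc m (N - 1 - (N - k) * 3), ∑ j2 ∈ Icc j1 (N - 1 - (N - k) * 3),
          Lf 2 j1 * Lf 1 (j2 + 2 * (N - k)))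
      + ∑ j1 ∈ Icc m (N - 1 - (N - k) * 3), ∑ j2 ∈ Icc j1 (N - 1 - (N - k) * 3),
          ∑ j3 ∈ Icc j2 (N - 1 - (N - k) * 3),
            Lf 1 j1 * Lf 1 (j2 + (N - k)) * Lf 1 (j3 + 2 * (N - k)) := by
  rw [gammaCoeff]
  rw [show Finset.Icc 1 3 = ({1, 2, 3} : Finset ℕ) from by decide,
    Finset.sum_insert (by decide), Finset.sum_insert (by decide), Finset.sum_singleton]
  simp only [Nat.cast_one, Nat.cast_ofNat]
  rw [show ((Fintype.piFinset fun _ : Fin 1 => ({1, 2, 3} : Finset ℕ)).filter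
      (fun dv => ∑ i, dv i = 3)) = {![3]} from by decide, Finset.sum_singleton]
  rw [show ((Fintype.piFinset fun _ : Fin 2 => ({1, 2, 3} : Finset ℕ)).filter
      (fun dv => ∑ i, dv i = 3)) = {![1,2], ![2,1]} from by decide,
    Finset.sum_insert (by decide), Finset.sum_singleton]
  rw [show ((Fintype.piFinset fun _ : Fin 3 => ({1, 2, 3} : Finset ℕ)).filter
      (fun dv => ∑ i, dv i = 3)) = {![1,1,1]} from by decide, Finset.sum_singleton]
  have hpt1 : ∀ jv ∈ ((Fintype.piFinset fun _ : Fin 1 => Finset.Icc m (N - 1 - (N - k) * 3)).filter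
      (fun jv => ∀ a b : Fin 1, a ≤ b → jv a ≤ jv b)),
      (∏ i : Fin 1, Lf (![3] i) (jv i + (∑ n ∈ Finset.Iio i, ((![3] n : ℕ) : ℤ)) * (N - k)))
      = Lf 3 (jv 0) := by
    intro jv _
    rw [Fin.prod_univ_one,
      show (∑ n ∈ Finset.Iio (0 : Fin 1), ((![3] n : ℕ) : ℤ)) = 0 from by decide,
      show ((![3] : Fin 1 → ℕ) 0) = 3 from rfl, zero_mul, add_zero]
  have hpt12 : ∀ jv ∈ ((Fintype.piFinset fun _ : Fin 2 => Finset.Icc m (N - 1 - (N - k) * 3)).filter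
      (fun jv => ∀ a b : Fin 2, a ≤ b → jv a ≤ jv b)),
      (∏ i : Fin 2, Lf (![1,2] i) (jv i + (∑ n ∈ Finset.Iio i, ((![1,2] n : ℕ) : ℤ)) * (N - k)))
      = Lf 1 (jv 0) * Lf 2 (jv 1 + (N - k)) := by
    intro jv _
    rw [Fin.prod_univ_two,
      show (∑ n ∈ Finset.Iio (0 : Fin 2), ((![1,2] n : ℕ) : ℤ)) = 0 from by decide,
      show (∑ n ∈ Finset.Iio (1 : Fin 2), ((![1,2] n : ℕ) : ℤ)) = 1 from by decide,
      show ((![1,2] : Fin 2 → ℕ) 0) = 1 from rfl,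
      show ((![1,2] : Fin 2 → ℕ) 1) = 2 from rfl, zero_mul, add_zero, one_mul]
  have hpt21 : ∀ jv ∈ ((Fintype.piFinset fun _ : Fin 2 => Finset.Icc m (N - 1 - (N - k) * 3)).filter
      (fun jv => ∀ a b : Fin 2, a ≤ b → jv a ≤ jv b)),
      (∏ i : Fin 2, Lf (![2,1] i) (jv i + (∑ n ∈ Finset.Iio i, ((![2,1] n : ℕ) : ℤ)) * (N - k)))
      = Lf 2 (jv 0) * Lf 1 (jv 1 + 2 * (N - k)) := by
    intro jv _
    rw [Fin.prod_univ_two,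
      show (∑ n ∈ Finset.Iio (0 : Fin 2), ((![2,1] n : ℕ) : ℤ)) = 0 from by decide,
      show (∑ n ∈ Finset.Iio (1 : Fin 2), ((![2,1] n : ℕ) : ℤ)) = 2 from by decide,
      show ((![2,1] : Fin 2 → ℕ) 0) = 2 from rfl,
      show ((![2,1] : Fin 2 → ℕ) 1) = 1 from rfl, zero_mul, add_zero]
  have hpt111 : ∀ jv ∈ ((Fintype.piFinset fun _ : Fin 3 => Finset.Icc m (N - 1 - (N - k) * 3)).filter
      (fun jv => ∀ a b : Fin 3, a ≤ b → jv a ≤ jv b)),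
      (∏ i : Fin 3, Lf (![1,1,1] i) (jv i + (∑ n ∈ Finset.Iio i, ((![1,1,1] n : ℕ) : ℤ)) * (N - k)))
      = Lf 1 (jv 0) * Lf 1 (jv 1 + (N - k)) * Lf 1 (jv 2 + 2 * (N - k)) := by
    intro jv _
    rw [Fin.prod_univ_three,
      show (∑ n ∈ Finset.Iio (0 : Fin 3), ((![1,1,1] n : ℕ) : ℤ)) = 0 from by decide,
      show (∑ n ∈ Finset.Iio (1 : Fin 3), ((![1,1,1] n : ℕ) : ℤ)) = 1 from by decide,
      show (∑ n ∈ Finset.Iio (2 : Fin 3), ((![1,1,1] n : ℕ) : ℤ)) = 2 from by decide,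
      show ((![1,1,1] : Fin 3 → ℕ) 0) = 1 from rfl,
      show ((![1,1,1] : Fin 3 → ℕ) 1) = 1 from rfl,
      show ((![1,1,1] : Fin 3 → ℕ) 2) = 1 from rfl, zero_mul, add_zero, one_mul]
  rw [Finset.sum_congr rfl hpt1,
    sum_pi1 (Icc m (N - 1 - (N - k) * 3)) (fun jv => Lf 3 (jv 0)),
    Finset.sum_congr rfl hpt12,
    sum_mono2 m (N - 1 - (N - k) * 3) (fun j1 j2 => Lf 1 j1 * Lf 2 (j2 + (N - k))),
    Finset.sum_congr rfl hpt21,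
    sum_mono2 m (N - 1 - (N - k) * 3) (fun j1 j2 => Lf 2 j1 * Lf 1 (j2 + 2 * (N - k))),
    Finset.sum_congr rfl hpt111,
    sum_mono3 m (N - 1 - (N - k) * 3)
      (fun j1 j2 j3 => Lf 1 j1 * Lf 1 (j2 + (N - k)) * Lf 1 (j3 + 2 * (N - k)))]
  simp only [Matrix.cons_val_zero]
  norm_num
  ring

end FanoAux

/-- Combinatorial content of Corollary 1: if the line constants are supported in
`0 ≤ m ≤ k−1` and sum to `k^k`, then for every `N` with `N − k ≥ 2` one has
`γ^{N,k,1}_0 = k^k` and `γ^{N,k,2}_0 = γ^{N,k,3}_0 = 0` for the family obtained by the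
downward iteration of the Fano recursion; i.e. the main relation of the quantum Kähler
subring is `(O_e)^{N−1} − k^k q (O_e)^{k−1} = 0` modulo `q⁴`. -/
theorem main_relation_Fano (k : ℕ) (hk : 2 ≤ k) (L : ℤ → ℚ)
    (hsupp : ∀ m : ℤ, L m ≠ 0 → 0 ≤ m ∧ m ≤ (k : ℤ) - 1)
    (hsum : ∑ m ∈ Finset.Icc (0 : ℤ) ((k : ℤ) - 1), L m = (k : ℚ) ^ k) :
    ∀ N : ℤ, 2 ≤ N - k →
      gammaCoeff N k (famN k L N) 1 0 = (k : ℚ) ^ k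
      ∧ gammaCoeff N k (famN k L N) 2 0 = 0
      ∧ gammaCoeff N k (famN k L N) 3 0 = 0 := by
  intro N hN
  have hL0 : ∀ m : ℤ, m < 0 → L m = 0 := fun m hm => by
    by_contra h; have := hsupp m h; omega
  have hLk : ∀ m : ℤ, (k:ℤ) ≤ m → L m = 0 := fun m hm => by
    by_contra h; have := hsupp m h; omega
  refine ⟨?_, ?_, ?_⟩
  · rw [FanoAux.E1 N k (famN k L N) 0,
      show N - 1 - (N - (k:ℤ)) * 1 = (k:ℤ) - 1 from by ring]
    rw [Finset.sum_congr rfl (fun j _ => show famN (k:ℤ) L N 1 j = L j from rfl)]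
    exact hsum
  · rw [FanoAux.E2 N k (famN k L N) 0]
    rcases le_or_gt (2*(k:ℤ)) N with hbig | hsmall
    · rw [Finset.Icc_eq_empty (a := (0:ℤ)) (by omega), Finset.sum_empty, Finset.sum_empty]
      ring
    · set t : ℕ := (2*(k:ℤ) - N).toNat with ht
      have htZ : (t:ℤ) = 2*(k:ℤ) - N := Int.toNat_of_nonneg (by omega)
      have hG := G2 hL0 hLk t 0 le_rfl
      rw [S2, T2] at hG
      simp only [show N - (k:ℤ) = (k:ℤ) - (t:ℤ) from by omega,
        show N - 1 - ((k:ℤ) - (t:ℤ)) * 2 = (t:ℤ) - 1 from by omega,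
        show ∀ j : ℤ, famN (k:ℤ) L N 2 j = iter2 (k:ℤ) L t j from fun j => rfl,
        show ∀ j : ℤ, famN (k:ℤ) L N 1 j = L j from fun j => rfl]
      rw [sub_eq_zero]
      exact hG
  · rw [FanoAux.E3 N k (famN k L N) 0]
    rcases le_or_gt (2*(k:ℤ)) N with hbig | hsmall
    · rw [Finset.Icc_eq_empty (a := (0:ℤ)) (by omega), Finset.sum_empty, Finset.sum_empty,
        Finset.sum_empty, Finset.sum_empty]
      ring
    · set t : ℕ := (2*(k:ℤ) - N).toNat with ht
      have htZ : (t:ℤ) = 2*(k:ℤ) - N := Int.toNat_of_nonneg (by omega)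
      have hG := G3 hL0 hLk (by positivity) t 0 le_rfl
      rw [S3, P3, Q3, W3] at hG
      simp only [show N - (k:ℤ) = (k:ℤ) - (t:ℤ) from by omega,
        show N - 1 - ((k:ℤ) - (t:ℤ)) * 3 = 2*(t:ℤ) - (k:ℤ) - 1 from by omega,
        show ∀ j : ℤ, famN (k:ℤ) L N 3 j = iter3 (k:ℤ) L t j from fun j => rfl,
        show ∀ j : ℤ, famN (k:ℤ) L N 2 j = iter2 (k:ℤ) L t j from fun j => rfl,
        show ∀ j : ℤ, famN (k:ℤ) L N 1 j = L j from fun j => rfl]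
      rw [hG]
      ring
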